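/- Let C > 0 and α > 0, and define P : ℂ → ℝ by P(z) = exp(−C/|Re z|^α) if Re z ≠ 0 and P(z) = 0 if Re z = 0. Then P is C^∞-smooth on ℂ and satisfies the condition (I); that is, with Ũ := {z ∈ ℂ : Re z ≠ 0}: (I.1) for every integer k ≥ 1 and every b ∈ ℂ∖{0}, limsup_{Ũ ∋ z → 0} |Re(b zᵏ P_z(z)/P(z))| = +∞, and (I.2) limsup_{Ũ ∋ z → 0} |P_z(z)/P(z)| = +∞. -/

import Mathlib

/-!
Write `E x = exp (-C * x ^ (-α))` for `x > 0`. Every derivative of `E` on `(0, ∞)` is a finite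
linear combination of functions `x ^ r * E x`, and each of these tends to `0` as `x → 0⁺`.
So `E`, extended by zero to `x ≤ 0`, is `C^∞`, and hence so is `P(z) = E(Re z) + E(-Re z)`.

Where `x = Re z > 0`, `P_z / P = C α x ^ (-α - 1) / 2` is real, and it blows up as `x → 0⁺`.
That gives (I.2). For (I.1), fix a small `y > 0` and let `z = x + i y` with `x → 0⁺`. At
`x = 0` the value and the `x`-derivative of `Re (b z ^ k)` are `-y ^ k Im w` and
`k y ^ (k - 1) Re w`, where `w = b i ^ (k - 1) ≠ 0`. They cannot both vanish, so
`|Re (b z ^ k)| ≥ c x`, and then `|Re (b z ^ k P_z / P)| ≥ c' x ^ (-α) → ∞`.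
-/

open Filter Set Metric Complex

/-- The Wirtinger derivative `∂u/∂z = (u_x - i u_y)/2` of a real-valued function on `ℂ`. -/
noncomputable def wDeriv (u : ℂ → ℝ) (z : ℂ) : ℂ :=
  (((fderiv ℝ u z) 1 : ℝ) - Complex.I * ((fderiv ℝ u z) Complex.I : ℝ)) / 2

open Topology
open scoped ContDiff

lemma continuousAt_indicator_Ioi_zero {f : ℝ → ℝ} (hf : Tendsto f (𝓝[>] 0) (𝓝 0)) :
    ContinuousAt ((Ioi 0).indicator f) 0 := by
  rw [continuousAt_iff_continuous_left_right, ← continuousWithinAt_Ioi_iff_Ici]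
  constructor
  · exact continuousWithinAt_const.congr (fun x hx => indicator_of_notMem (not_lt.2 hx) f)
      (indicator_of_notMem (lt_irrefl _) f)
  · rw [ContinuousWithinAt, indicator_of_notMem (s := Ioi 0) (lt_irrefl _) f]
    refine hf.congr' ?_
    filter_upwards [self_mem_nhdsWithin] with x hx using (indicator_of_mem hx f).symm

lemma hasDerivAt_indicator_Ioi {f g : ℝ → ℝ} (hfg : ∀ x > 0, HasDerivAt f (g x) x)
    (hf : Tendsto f (𝓝[>] 0) (𝓝 0)) (hg : Tendsto g (𝓝[>] 0) (𝓝 0)) (x : ℝ) :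
    HasDerivAt ((Ioi 0).indicator f) ((Ioi 0).indicator g x) x := by
  refine hasDerivAt_of_hasDerivAt_of_ne' (fun y hy => ?_) (continuousAt_indicator_Ioi_zero hf)
    (continuousAt_indicator_Ioi_zero hg) x
  rcases hy.lt_or_gt with hy | hy
  · have hzero : (Ioi 0).indicator f =ᶠ[𝓝 y] fun _ => 0 := by
      filter_upwards [eventually_lt_nhds hy] with z hz
        using indicator_of_notMem (not_lt.2 hz.le) f
    rw [indicator_of_notMem (s := Ioi 0) (not_lt.2 hy.le)]
    exact (hasDerivAt_const y 0).congr_of_eventuallyEq hzero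
  · have hpos : (Ioi 0).indicator f =ᶠ[𝓝 y] f := by
      filter_upwards [eventually_gt_nhds hy] with z hz using indicator_of_mem hz f
    rw [indicator_of_mem (s := Ioi 0) hy]
    exact (hfg y hy).congr_of_eventuallyEq hpos

theorem contDiff_indicator_Ioi {M : Set (ℝ → ℝ)}
    (hlim : ∀ f ∈ M, Tendsto f (𝓝[>] 0) (𝓝 0))
    (hderiv : ∀ f ∈ M, ∃ g ∈ M, ∀ x > 0, HasDerivAt f (g x) x) {f : ℝ → ℝ}
    (hf : f ∈ M) :
    ContDiff ℝ ∞ ((Ioi 0).indicator f) := by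
  refine contDiff_infty.2 fun n => ?_
  induction n generalizing f with
  | zero =>
    obtain ⟨g, hg, hfg⟩ := hderiv f hf
    exact contDiff_zero.2 <| continuous_iff_continuousAt.2 fun x =>
      (hasDerivAt_indicator_Ioi hfg (hlim f hf) (hlim g hg) x).continuousAt
  | succ n ih =>
    obtain ⟨g, hg, hfg⟩ := hderiv f hf
    have hd := hasDerivAt_indicator_Ioi hfg (hlim f hf) (hlim g hg)
    rw [Nat.cast_succ, contDiff_succ_iff_deriv, funext fun x => (hd x).deriv]
    exact ⟨fun x => (hd x).differentiableAt, by simp, ih hg⟩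

section Flat

variable {C α : ℝ}

lemma tendsto_rpow_mul_exp_neg_mul_rpow_neg (hC : 0 < C) (hα : 0 < α) (r : ℝ) :
    Tendsto (fun x : ℝ => x ^ r * Real.exp (-C * x ^ (-α))) (𝓝[>] 0) (𝓝 0) := by
  refine ((tendsto_rpow_mul_exp_neg_mul_atTop_nhds_zero (-r / α) C hC).comp
    (tendsto_rpow_neg_nhdsGT_zero (neg_lt_zero.2 hα))).congr' ?_
  filter_upwards [self_mem_nhdsWithin] with x (hx : 0 < x)
  rw [Function.comp_apply, ← Real.rpow_mul hx.le]
  congr 2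
  field_simp

lemma hasDerivAt_exp_neg_mul_rpow_neg {x : ℝ} (hx : 0 < x) :
    HasDerivAt (fun x : ℝ => Real.exp (-C * x ^ (-α)))
      (C * α * x ^ (-α - 1) * Real.exp (-C * x ^ (-α))) x := by
  convert ((Real.hasDerivAt_rpow_const (p := -α) (Or.inl hx.ne')).const_mul (-C)).exp using 1
  ring

lemma hasDerivAt_rpow_mul_exp_neg_mul_rpow_neg (r : ℝ) {x : ℝ} (hx : 0 < x) :
    HasDerivAt (fun x : ℝ => x ^ r * Real.exp (-C * x ^ (-α)))
      (r * (x ^ (r - 1) * Real.exp (-C * x ^ (-α)))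
        + C * α * (x ^ (r - α - 1) * Real.exp (-C * x ^ (-α)))) x := by
  refine ((Real.hasDerivAt_rpow_const (Or.inl hx.ne')).mul
    (hasDerivAt_exp_neg_mul_rpow_neg hx)).congr_deriv ?_
  rw [show r - α - 1 = r + (-α - 1) by ring, Real.rpow_add hx]
  ring

variable (C α) in
def flatSpan : Submodule ℝ (ℝ → ℝ) :=
  Submodule.span ℝ (range fun (r : ℝ) x => x ^ r * Real.exp (-C * x ^ (-α)))

lemma rpow_mul_exp_mem_flatSpan (r : ℝ) :
    (fun x : ℝ => x ^ r * Real.exp (-C * x ^ (-α))) ∈ flatSpan C α :=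
  Submodule.subset_span ⟨r, rfl⟩

lemma tendsto_of_mem_flatSpan (hC : 0 < C) (hα : 0 < α) {f : ℝ → ℝ}
    (hf : f ∈ flatSpan C α) :
    Tendsto f (𝓝[>] 0) (𝓝 0) := by
  induction hf using Submodule.span_induction with
  | mem f hf =>
    obtain ⟨r, rfl⟩ := hf
    exact tendsto_rpow_mul_exp_neg_mul_rpow_neg hC hα r
  | zero => exact tendsto_const_nhds
  | add f g _ _ hf hg => have := hf.add hg; rwa [add_zero] at this
  | smul c f _ hf => have := hf.const_smul c; rwa [smul_zero] at this

lemma exists_hasDerivAt_of_mem_flatSpan {f : ℝ → ℝ} (hf : f ∈ flatSpan C α) :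
    ∃ g ∈ flatSpan C α, ∀ x > 0, HasDerivAt f (g x) x := by
  induction hf using Submodule.span_induction with
  | mem f hf =>
    obtain ⟨r, rfl⟩ := hf
    exact ⟨_, add_mem (Submodule.smul_mem _ r (rpow_mul_exp_mem_flatSpan (r - 1)))
      (Submodule.smul_mem _ (C * α) (rpow_mul_exp_mem_flatSpan (r - α - 1))),
      fun x hx => hasDerivAt_rpow_mul_exp_neg_mul_rpow_neg r hx⟩
  | zero => exact ⟨0, zero_mem _, fun x _ => hasDerivAt_const x 0⟩
  | add f g _ _ hf hg =>
    obtain ⟨f', hf'M, hf'⟩ := hf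
    obtain ⟨g', hg'M, hg'⟩ := hg
    exact ⟨f' + g', add_mem hf'M hg'M, fun x hx => (hf' x hx).add (hg' x hx)⟩
  | smul c f _ hf =>
    obtain ⟨f', hf'M, hf'⟩ := hf
    exact ⟨c • f', Submodule.smul_mem _ c hf'M, fun x hx => (hf' x hx).const_smul c⟩

lemma contDiff_exp_neg_div_abs_rpow (hC : 0 < C) (hα : 0 < α) :
    ContDiff ℝ ∞ fun x : ℝ => if x = 0 then 0 else Real.exp (-C / |x| ^ α) := by
  have hsmooth := contDiff_indicator_Ioi (M := flatSpan C α)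
    (fun _ => tendsto_of_mem_flatSpan hC hα) (fun _ => exists_hasDerivAt_of_mem_flatSpan)
    (by simpa using rpow_mul_exp_mem_flatSpan (C := C) (α := α) 0)
  convert hsmooth.add (hsmooth.comp contDiff_neg) using 1
  funext x
  rcases lt_trichotomy x 0 with hx | rfl | hx
  · simp [hx.ne, hx, hx.le, abs_of_neg hx, Real.rpow_neg (neg_nonneg.2 hx.le),
      div_eq_mul_inv]
  · simp
  · simp [hx.ne', hx, hx.le, abs_of_pos hx, Real.rpow_neg hx.le, div_eq_mul_inv]

end Flat

lemma wDeriv_of_eventuallyEq_comp_re {u : ℂ → ℝ} {h : ℝ → ℝ} {z : ℂ} {d : ℝ}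
    (hu : u =ᶠ[𝓝 z] fun w => h w.re) (hh : HasDerivAt h d z.re) : wDeriv u z = d / 2 := by
  have hfd : HasFDerivAt u (d • reCLM) z :=
    (hh.comp_hasFDerivAt z reCLM.hasFDerivAt).congr_of_eventuallyEq hu
  simp [wDeriv, hfd.fderiv]

lemma exists_mul_le_abs_of_hasDerivAt {q : ℝ → ℝ} {d : ℝ} (hq : HasDerivAt q d 0)
    (hne : q 0 ≠ 0 ∨ d ≠ 0) : ∃ c > 0, ∀ᶠ x in 𝓝[>] 0, c * x ≤ |q x| := by
  by_cases hq0 : q 0 = 0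
  · have hd : d ≠ 0 := hne.resolve_left (not_not.2 hq0)
    refine ⟨|d| / 2, by positivity, ?_⟩
    have hslope : Tendsto (fun x => |q x| / x) (𝓝[>] 0) (𝓝 |d|) := by
      refine ((hasDerivAt_iff_tendsto_slope.1 hq).mono_left
        (nhdsWithin_mono 0 fun x (hx : 0 < x) => hx.ne')).abs.congr' ?_
      filter_upwards [self_mem_nhdsWithin] with x (hx : 0 < x)
      rw [slope_def_field, hq0, sub_zero, sub_zero, abs_div, abs_of_pos hx]
    filter_upwards [hslope.eventually (eventually_gt_nhds (half_lt_self (abs_pos.2 hd))),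
      self_mem_nhdsWithin] with x hx (hx0 : 0 < x)
    exact ((lt_div_iff₀ hx0).1 hx).le
  · refine ⟨|q 0| / 2, by positivity, ?_⟩
    have hnear : ∀ᶠ x in 𝓝[>] 0, |q 0| / 2 < |q x| :=
      (hq.continuousAt.abs.eventually
        (eventually_gt_nhds (half_lt_self (abs_pos.2 hq0)))).filter_mono nhdsWithin_le_nhds
    have hsmall : ∀ᶠ x in 𝓝[>] (0 : ℝ), x < 1 :=
      (eventually_lt_nhds one_pos).filter_mono nhdsWithin_le_nhds
    filter_upwards [hnear, hsmall, self_mem_nhdsWithin] with x hx hx1 (hx0 : 0 < x)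
    nlinarith [abs_nonneg (q 0)]

lemma frequently_nhdsWithin_re_ne_zero {p : ℂ → Prop}
    (h : ∀ y : ℝ, 0 < y → ∀ᶠ x : ℝ in 𝓝[>] 0, p (x + y * I)) :
    ∃ᶠ z in 𝓝[{z : ℂ | z.re ≠ 0}] 0, p z := by
  rw [frequently_iff]
  intro U hU
  obtain ⟨ε, hε, hsub⟩ := mem_nhdsWithin_iff.1 hU
  have hsmall : ∀ᶠ x in 𝓝[>] (0 : ℝ), x < ε / 2 :=
    (eventually_lt_nhds (half_pos hε)).filter_mono nhdsWithin_le_nhds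
  obtain ⟨x, hpx, hx, hx0⟩ :=
    ((h (ε / 2) (half_pos hε)).and (hsmall.and self_mem_nhdsWithin)).exists
  refine ⟨x + (ε / 2 : ℝ) * I, hsub ⟨?_, ?_⟩, hpx⟩
  · rw [mem_ball, dist_zero_right]
    calc ‖(x : ℂ) + (ε / 2 : ℝ) * I‖
        ≤ ‖(x : ℂ)‖ + ‖((ε / 2 : ℝ) : ℂ) * I‖ := norm_add_le _ _
      _ = x + ε / 2 := by simp [abs_of_pos hx0, abs_of_pos hε]
      _ < ε := by linarith
  · simpa using (ne_of_gt hx0)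

lemma exists_mul_le_abs_re_mul_pow {b : ℂ} (hb : b ≠ 0) (m : ℕ) {y : ℝ} (hy : 0 < y) :
    ∃ c > 0, ∀ᶠ x : ℝ in 𝓝[>] 0, c * x ≤ |(b * (x + y * I) ^ (m + 1)).re| := by
  have hderiv : HasDerivAt (fun x : ℝ => (b * (x + y * I) ^ (m + 1)).re)
      (b * ((m + 1 : ℕ) * (y * I) ^ m)).re 0 := by
    have := (((hasDerivAt_id ((0 : ℝ) : ℂ)).add_const (y * I)).pow (m + 1)).const_mul b
    simpa using this.real_of_complex
  refine exists_mul_le_abs_of_hasDerivAt hderiv ?_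
  set w := b * I ^ m
  have hw : w ≠ 0 := mul_ne_zero hb (pow_ne_zero _ I_ne_zero)
  have hq0 : (b * ((0 : ℝ) + y * I) ^ (m + 1)).re = -(y ^ (m + 1) * w.im) := by
    rw [show b * ((0 : ℝ) + y * I) ^ (m + 1) = ((y ^ (m + 1) : ℝ) : ℂ) * (w * I) by
      push_cast; ring, re_ofReal_mul, mul_I_re, mul_neg]
  have hd : (b * ((m + 1 : ℕ) * (y * I) ^ m)).re = (m + 1) * y ^ m * w.re := by
    rw [show b * ((m + 1 : ℕ) * (y * I) ^ m) = (((m + 1) * y ^ m : ℝ) : ℂ) * w by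
      push_cast; ring, re_ofReal_mul]
  rw [hq0, hd]
  by_contra! h
  exact hw (Complex.ext (by simpa [hy.ne', Nat.cast_add_one_ne_zero] using h.2)
    (by simpa [hy.ne'] using h.1))

lemma tendsto_abs_mul_rpow_atTop {q : ℝ → ℝ} {c s : ℝ} (hc : 0 < c) (hs : 0 < s)
    (hq : ∀ᶠ x in 𝓝[>] 0, c * x ≤ |q x|) :
    Tendsto (fun x => |q x| * x ^ (-s - 1)) (𝓝[>] 0) atTop := by
  refine tendsto_atTop_mono' _ ?_
    ((tendsto_rpow_neg_nhdsGT_zero (neg_lt_zero.2 hs)).const_mul_atTop hc)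
  filter_upwards [hq, self_mem_nhdsWithin] with x hx (hx0 : 0 < x)
  calc c * x ^ (-s) = c * x ^ (1 + (-s - 1)) := by ring_nf
    _ = c * x * x ^ (-s - 1) := by rw [Real.rpow_add hx0, Real.rpow_one]; ring
    _ ≤ |q x| * x ^ (-s - 1) := by gcongr

section WirtingerRatio

variable {C α : ℝ} {P : ℂ → ℝ}

lemma wDeriv_div_eq
    (hP : ∀ z : ℂ, P z = if z.re = 0 then 0 else Real.exp (-C / |z.re| ^ α))
    {z : ℂ} (hz : 0 < z.re) :
    wDeriv P z / P z = ((C * α * z.re ^ (-α - 1) / 2 : ℝ) : ℂ) := by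
  have hPpos : ∀ w : ℂ, 0 < w.re → P w = Real.exp (-C * w.re ^ (-α)) := fun w hw => by
    rw [hP, if_neg hw.ne', abs_of_pos hw, Real.rpow_neg hw.le, div_eq_mul_inv]
  have hloc : P =ᶠ[𝓝 z] fun w => Real.exp (-C * w.re ^ (-α)) :=
    (continuous_re.tendsto z).eventually (eventually_gt_nhds hz) |>.mono hPpos
  rw [wDeriv_of_eventuallyEq_comp_re hloc (hasDerivAt_exp_neg_mul_rpow_neg hz), hPpos z hz]
  have hexp : (Real.exp (-C * z.re ^ (-α)) : ℂ) ≠ 0 := ofReal_ne_zero.2 (Real.exp_ne_zero _)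
  field_simp
  push_cast
  ring

lemma frequently_lt_abs_re_mul_pow_mul_wDeriv_div
    (hP : ∀ z : ℂ, P z = if z.re = 0 then 0 else Real.exp (-C / |z.re| ^ α))
    (hC : 0 < C) (hα : 0 < α) {b : ℂ} (hb : b ≠ 0) (m : ℕ) (B : ℝ) :
    ∃ᶠ z in 𝓝[{z : ℂ | z.re ≠ 0}] 0, B < |(b * z ^ (m + 1) * wDeriv P z / P z).re| := by
  refine frequently_nhdsWithin_re_ne_zero fun y hy => ?_
  obtain ⟨c, hc, hq⟩ := exists_mul_le_abs_re_mul_pow hb m hy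
  filter_upwards [((tendsto_abs_mul_rpow_atTop hc hα hq).const_mul_atTop
      (by positivity : 0 < C * α / 2)).eventually_gt_atTop B,
    self_mem_nhdsWithin] with x hx (hx0 : 0 < x)
  have hre : ((x : ℂ) + y * I).re = x := by simp
  have hρ : 0 < C * α * x ^ (-α - 1) / 2 := by positivity
  rw [mul_div_assoc, wDeriv_div_eq hP (hre.symm ▸ hx0), re_mul_ofReal, abs_mul, hre,
    abs_of_pos hρ]
  linarith

lemma frequently_lt_norm_wDeriv_div
    (hP : ∀ z : ℂ, P z = if z.re = 0 then 0 else Real.exp (-C / |z.re| ^ α))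
    (hC : 0 < C) (hα : 0 < α) (B : ℝ) :
    ∃ᶠ z in 𝓝[{z : ℂ | z.re ≠ 0}] 0, B < ‖wDeriv P z / P z‖ := by
  refine frequently_nhdsWithin_re_ne_zero fun y _ => ?_
  filter_upwards [((tendsto_rpow_neg_nhdsGT_zero (y := -α - 1) (by linarith)).const_mul_atTop
      (by positivity : 0 < C * α / 2)).eventually_gt_atTop B,
    self_mem_nhdsWithin] with x hx (hx0 : 0 < x)
  have hre : ((x : ℂ) + y * I).re = x := by simp
  have hρ : 0 < C * α * x ^ (-α - 1) / 2 := by positivity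
  rw [wDeriv_div_eq hP (hre.symm ▸ hx0), norm_real, Real.norm_eq_abs, hre, abs_of_pos hρ]
  linarith

end WirtingerRatio

theorem stmt_6 (C α : ℝ) (hC : 0 < C) (hα : 0 < α) (P : ℂ → ℝ)
    (hP : ∀ z : ℂ, P z = if z.re = 0 then 0 else Real.exp (-C / |z.re| ^ α)) :
    ContDiff ℝ (⊤ : ℕ∞) P ∧
    (∀ k : ℕ, 1 ≤ k → ∀ b : ℂ, b ≠ 0 → ∀ B : ℝ,
      ∃ᶠ z in nhdsWithin (0:ℂ) {z : ℂ | z.re ≠ 0},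
        B < |(b * z ^ k * wDeriv P z / (P z : ℂ)).re|) ∧
    (∀ B : ℝ,
      ∃ᶠ z in nhdsWithin (0:ℂ) {z : ℂ | z.re ≠ 0},
        B < ‖wDeriv P z / (P z : ℂ)‖) := by
  refine ⟨?_, fun k hk b hb B => ?_, frequently_lt_norm_wDeriv_div hP hC hα⟩
  · rw [funext hP]
    exact (contDiff_exp_neg_div_abs_rpow hC hα).comp reCLM.contDiff
  · obtain ⟨m, rfl⟩ := Nat.exists_eq_add_of_le' hk
    exact frequently_lt_abs_re_mul_pow_mul_wDeriv_div hP hC hα hb m B
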